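/- Let X be a δ-hyperbolic geodesic metric space, let f ∈ Isom(X) be a hyperbolic isometry with attracting and repelling fixed points A_+ and A_- in ∂X, fix disjoint neighborhoods U_+ and U_- of A_+ and A_- in X̄, and fix x ∈ X ∩ U_+. Then there exist C ≥ 0 and M_1 ≥ 0, depending only on δ, f, x, U_+ and U_-, such that for every g ∈ Isom(X) with g U_+ ∩ U_- = ∅ and every m ≥ M_1: d(x, (f^m g)^2 x) ≥ 2 d(x, f^m g x) − 2C. -/

import Mathlib

open Filter Metric Set

noncomputable section

universe u

variable {X : Type u} [MetricSpace X]

/-- The Gromov product `(x·y)_w = ½(d(x,w) + d(w,y) − d(x,y))`. -/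
def gromovProduct (w x y : X) : ℝ := (dist x w + dist w y - dist x y) / 2

/-- `γ` is a geodesic from `x` to `y`, parametrized by arc length on `[0, dist x y]`. -/
structure IsGeodesicSegment (γ : ℝ → X) (x y : X) : Prop where
  source : γ 0 = x
  target : γ (dist x y) = y
  isom : ∀ ⦃s t : ℝ⦄, s ∈ Set.Icc (0 : ℝ) (dist x y) → t ∈ Set.Icc (0 : ℝ) (dist x y) →
    dist (γ s) (γ t) = |s - t|

/-- A geodesic metric space is `δ`-hyperbolic: every pair of points is joined by a
geodesic, every geodesic triangle is `δ`-slim, every geodesic triangle has insize at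
most `δ`, and the Gromov product is `δ`-hyperbolic. -/
structure IsDeltaHyperbolic (X : Type u) [MetricSpace X] (δ : ℝ) : Prop where
  delta_nonneg : 0 ≤ δ
  geodesic : ∀ x y : X, ∃ γ : ℝ → X, IsGeodesicSegment γ x y
  slim : ∀ (x y z : X) (α β γ : ℝ → X),
    IsGeodesicSegment α y z → IsGeodesicSegment β z x → IsGeodesicSegment γ x y →
    ∀ s ∈ Set.Icc (0 : ℝ) (dist y z),
      (∃ t ∈ Set.Icc (0 : ℝ) (dist z x), dist (α s) (β t) ≤ δ) ∨
      (∃ t ∈ Set.Icc (0 : ℝ) (dist x y), dist (α s) (γ t) ≤ δ)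
  insize : ∀ (x y z : X) (α β γ : ℝ → X),
    IsGeodesicSegment α y z → IsGeodesicSegment β z x → IsGeodesicSegment γ x y →
    dist (α (gromovProduct y x z)) (β (gromovProduct z x y)) ≤ δ ∧
    dist (β (gromovProduct z x y)) (γ (gromovProduct x y z)) ≤ δ ∧
    dist (γ (gromovProduct x y z)) (α (gromovProduct y x z)) ≤ δ
  gromov : ∀ w x y z : X,
    min (gromovProduct w x y) (gromovProduct w y z) - δ ≤ gromovProduct w x z

/-- An isometry `f` of `X` is hyperbolic if for every `x ∈ X` there is `t > 0` with
`t|m − n| ≤ d(f^m x, f^n x)` for all integers `m, n`. -/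
def IsHyperbolicIsometry (f : X ≃ᵢ X) : Prop :=
  ∀ x : X, ∃ t : ℝ, 0 < t ∧
    ∀ m n : ℤ, t * |(m : ℝ) - (n : ℝ)| ≤ dist ((f ^ m) x) ((f ^ n) x)

/-- A sequence converges to infinity if the Gromov products `(x_i·x_j)_w → ∞`. -/
def ConvergesToInfinity (w : X) (u : ℕ → X) : Prop :=
  Tendsto (fun p : ℕ × ℕ => gromovProduct w (u p.1) (u p.2)) atTop atTop

/-- Two sequences are equivalent if the mixed Gromov products tend to infinity. -/
def SeqEquiv (w : X) (u v : ℕ → X) : Prop :=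
  Tendsto (fun p : ℕ × ℕ => gromovProduct w (u p.1) (v p.2)) atTop atTop

/-- Sequences converging to infinity. -/
def BoundarySeq (w : X) : Type u := {u : ℕ → X // ConvergesToInfinity w u}

/-- The Gromov boundary `∂X`: equivalence classes of sequences converging to infinity. -/
def GromovBoundary (w : X) : Type u :=
  Quot (fun u v : BoundarySeq w => SeqEquiv w u.1 v.1)

/-- The boundary point determined by a sequence converging to infinity. -/
def boundaryPt (w : X) (u : BoundarySeq w) : GromovBoundary w := Quot.mk _ u

/-- `X̄ = X ∪ ∂X`. -/
def GromovClosure (w : X) : Type u := X ⊕ GromovBoundary w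

theorem gromovProduct_basepoint_ge (w w' x y : X) :
    gromovProduct w x y - dist w w' ≤ gromovProduct w' x y := by
  have h1 : |dist w' x - dist w x| ≤ dist w' w := abs_dist_sub_le w' w x
  have h2 : |dist w' y - dist w y| ≤ dist w' w := abs_dist_sub_le w' w y
  rw [abs_le] at h1 h2
  unfold gromovProduct
  rw [dist_comm x w', dist_comm x w, dist_comm w w']
  linarith [h1.1, h1.2, h2.1, h2.2]

theorem gromovProduct_isometry (f : X ≃ᵢ X) (w x y : X) :
    gromovProduct w (f x) (f y) = gromovProduct (f.symm w) x y := by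
  unfold gromovProduct
  conv_lhs => rw [show w = f (f.symm w) from (f.apply_symm_apply w).symm]
  rw [f.dist_eq, f.dist_eq, f.dist_eq]

theorem convergesToInfinity_isometry {w : X} (f : X ≃ᵢ X) {u : ℕ → X}
    (h : ConvergesToInfinity w u) :
    ConvergesToInfinity w (fun n => f (u n)) := by
  refine tendsto_atTop_mono (fun p => ?_)
    (tendsto_atTop_add_const_right atTop (-dist w (f.symm w)) h)
  have h1 := gromovProduct_basepoint_ge w (f.symm w) (u p.1) (u p.2)
  have h2 := gromovProduct_isometry f w (u p.1) (u p.2)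
  dsimp only
  linarith

theorem seqEquiv_isometry {w : X} (f : X ≃ᵢ X) {u v : ℕ → X}
    (h : SeqEquiv w u v) :
    SeqEquiv w (fun n => f (u n)) (fun n => f (v n)) := by
  refine tendsto_atTop_mono (fun p => ?_)
    (tendsto_atTop_add_const_right atTop (-dist w (f.symm w)) h)
  have h1 := gromovProduct_basepoint_ge w (f.symm w) (u p.1) (v p.2)
  have h2 := gromovProduct_isometry f w (u p.1) (v p.2)
  dsimp only
  linarith

/-- The extension of an isometry of `X` to the Gromov boundary. -/
def boundaryMap (w : X) (f : X ≃ᵢ X) : GromovBoundary w → GromovBoundary w :=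
  Quot.lift
    (fun u : BoundarySeq w =>
      boundaryPt w ⟨fun n => f (u.1 n), convergesToInfinity_isometry f u.2⟩)
    (fun _ _ h => Quot.sound (seqEquiv_isometry f h))

/-- The extension of an isometry of `X` to `X̄ = X ∪ ∂X`. -/
def closureMap (w : X) (f : X ≃ᵢ X) : GromovClosure w → GromovClosure w
  | Sum.inl x => Sum.inl (f x)
  | Sum.inr a => Sum.inr (boundaryMap w f a)

/-- The Gromov product of a boundary point with a point of `X̄`, extended by
taking infima of liminfs over representative sequences. -/
noncomputable def boundaryGP (w : X) (a : GromovBoundary w) : GromovClosure w → ℝ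
  | Sum.inl p => sInf {r : ℝ | ∃ u : BoundarySeq w, boundaryPt w u = a ∧
      r = Filter.liminf (fun n => gromovProduct w (u.1 n) p) atTop}
  | Sum.inr b => sInf {r : ℝ | ∃ u v : BoundarySeq w, boundaryPt w u = a ∧
      boundaryPt w v = b ∧
      r = Filter.liminf (fun n => gromovProduct w (u.1 n) (v.1 n)) atTop}

/-- The basis for the topology on `X̄`: open balls in `X`, and the sets
`N(â,k) = {y : (â·y)_w > k}` for boundary points `â` and `k > 0`. -/
def closureBasis (w : X) : Set (Set (GromovClosure w)) :=
  {S | (∃ (x : X) (r : ℝ), 0 < r ∧ S = Sum.inl '' Metric.ball x r) ∨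
       (∃ (a : GromovBoundary w) (k : ℝ), 0 < k ∧ S = {y | k < boundaryGP w a y})}

/-- The topology on `X̄` generated by the basis above. -/
def closureTop (w : X) : TopologicalSpace (GromovClosure w) :=
  TopologicalSpace.generateFrom (closureBasis w)

/-- `S ⊆ X̄` is a neighborhood of `p ∈ X̄`. -/
def IsNeighborhood (w : X) (S : Set (GromovClosure w)) (p : GromovClosure w) : Prop :=
  S ∈ @nhds (GromovClosure w) (closureTop w) p

/-- `a ∈ ∂X` is the attracting fixed point of `f`: it is represented by the
sequence `(f^n x)` for a point `x ∈ X`. -/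
def IsAttractingFixedPt (w : X) (f : X ≃ᵢ X) (a : GromovBoundary w) : Prop :=
  ∃ (x : X) (h : ConvergesToInfinity w (fun n : ℕ => (f ^ (n : ℤ)) x)),
    boundaryPt w ⟨fun n : ℕ => (f ^ (n : ℤ)) x, h⟩ = a

/-- `a ∈ ∂X` is the repelling fixed point of `f`: the attracting fixed point of `f⁻¹`. -/
def IsRepellingFixedPt (w : X) (f : X ≃ᵢ X) (a : GromovBoundary w) : Prop :=
  IsAttractingFixedPt w f⁻¹ a

/-- The concatenation `α · (f α)` of a path `α` defined on `[0, L]` with its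
image under `f`, parametrized on `[0, 2L]`. -/
noncomputable def concatPath (f : X ≃ᵢ X) (α : ℝ → X) (L : ℝ) : ℝ → X :=
  fun s => if s ≤ L then α s else f (α (s - L))

/-!
Write `h = fᵐ g`, `p = h⁻¹ x` and `q = h x`. Since `h` is an isometry,
`d(x, h² x) = d(p, q) = 2 d(x, h x) - 2 (p·q)_x`, so it suffices to bound `(p·q)_w` independently
of `g` and `m`.

Points of `X` outside a neighbourhood `U` of a boundary point `[v]` have uniformly bounded Gromov
product with all late terms of `v`: otherwise they would form a sequence equivalent to `v`, and
such a sequence converges to `[v]` in `X̄`, hence eventually enters `U`. Let `A₊ = [fⁿ x₀]` and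
`A₋ = [f⁻ⁿ x₁]`. Now `f⁻ᵐ x` stays at bounded distance from `f⁻ᵐ x₁`, so it lies in `U₋` for
large `m`, and `g p = f⁻ᵐ x` puts `p` outside `U₊`; thus `(p · fᵐ x₀)_w` is bounded. Likewise
`g x ∉ U₋` bounds `(g x · f⁻ᵐ x₁)_w`, which forces `(q · fᵐ x₀)_w` to grow with `d(w, fᵐ x₀)`.
Hyperbolicity of the Gromov product then bounds `(p·q)_w`.
-/

theorem gromovProduct_comm (w x y : X) : gromovProduct w x y = gromovProduct w y x := by
  unfold gromovProduct
  rw [dist_comm x w, dist_comm w y, dist_comm x y]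
  ring

theorem gromovProduct_self (w x : X) : gromovProduct w x x = dist x w := by
  unfold gromovProduct
  rw [dist_self, dist_comm w x]
  ring

theorem gromovProduct_nonneg (w x y : X) : 0 ≤ gromovProduct w x y := by
  unfold gromovProduct
  linarith [dist_triangle x w y]

theorem gromovProduct_le_dist_right (w x y : X) : gromovProduct w x y ≤ dist y w := by
  unfold gromovProduct
  linarith [dist_triangle x y w, dist_comm w y]

theorem gromovProduct_le_add_dist_left (w x x' y : X) :
    gromovProduct w x y ≤ gromovProduct w x' y + dist x x' := by
  unfold gromovProduct
  linarith [dist_triangle x x' w, dist_triangle x' x y, dist_comm x x']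

theorem dist_sub_le_two_mul_gromovProduct_apply (φ : X ≃ᵢ X) (w a b c : X) :
    dist (φ b) w - dist b w - dist c w - 2 * gromovProduct w a (φ⁻¹ c) ≤
      2 * gromovProduct w (φ a) (φ b) := by
  have hc : dist a (φ⁻¹ c) = dist (φ a) c := by
    rw [← φ.dist_eq, IsometryEquiv.apply_inv_self]
  unfold gromovProduct
  linarith [φ.dist_eq a b, dist_triangle (φ a) w c, dist_triangle a w b, dist_comm w b,
    dist_comm w c, dist_comm w (φ b), dist_nonneg (x := w) (y := φ⁻¹ c)]

theorem dist_sq_apply (h : X ≃ᵢ X) (x : X) :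
    dist x ((h ^ 2) x) = 2 * dist x (h x) - 2 * gromovProduct x (h⁻¹ x) (h x) := by
  have hpq : dist (h⁻¹ x) (h x) = dist x ((h ^ 2) x) := by
    rw [← h.dist_eq, IsometryEquiv.apply_inv_self, sq, IsometryEquiv.mul_apply]
  have hpx : dist (h⁻¹ x) x = dist x (h x) := by
    rw [← h.dist_eq, IsometryEquiv.apply_inv_self]
  unfold gromovProduct
  rw [hpq, hpx]
  ring

theorem IsDeltaHyperbolic.le_gromovProduct_of_le {δ : ℝ} (hX : IsDeltaHyperbolic X δ)
    {w x y z : X} {K : ℝ} (hxy : K + δ ≤ gromovProduct w x y)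
    (hyz : K + δ ≤ gromovProduct w y z) : K ≤ gromovProduct w x z := by
  linarith [hX.gromov w x y z, le_min hxy hyz]

theorem tendsto_atTop_pair_iff {F : ℕ × ℕ → ℝ} :
    Tendsto F atTop atTop ↔ ∀ K : ℝ, ∃ N : ℕ, ∀ i j, N ≤ i → N ≤ j → K ≤ F (i, j) := by
  simp only [Filter.tendsto_atTop, eventually_atTop_prod_self]

theorem seqEquiv_iff {w : X} {u v : ℕ → X} :
    SeqEquiv w u v ↔ ∀ K : ℝ, ∃ N : ℕ, ∀ i j, N ≤ i → N ≤ j →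
      K ≤ gromovProduct w (u i) (v j) :=
  tendsto_atTop_pair_iff

theorem SeqEquiv.symm {w : X} {u v : ℕ → X} (h : SeqEquiv w u v) : SeqEquiv w v u := by
  rw [seqEquiv_iff] at h ⊢
  intro K
  obtain ⟨N, hN⟩ := h K
  exact ⟨N, fun i j hi hj => gromovProduct_comm w (u j) (v i) ▸ hN j i hj hi⟩

theorem SeqEquiv.trans {δ : ℝ} (hX : IsDeltaHyperbolic X δ) {w : X} {u v z : ℕ → X}
    (huv : SeqEquiv w u v) (hvz : SeqEquiv w v z) : SeqEquiv w u z := by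
  rw [seqEquiv_iff] at huv hvz ⊢
  intro K
  obtain ⟨N₁, hN₁⟩ := huv (K + δ)
  obtain ⟨N₂, hN₂⟩ := hvz (K + δ)
  refine ⟨max N₁ N₂, fun i j hi hj => hX.le_gromovProduct_of_le (y := v (max N₁ N₂)) ?_ ?_⟩
  · exact hN₁ _ _ (le_of_max_le_left hi) (le_max_left _ _)
  · exact hN₂ _ _ (le_max_right _ _) (le_of_max_le_right hj)

-- `Quot` identifies along the equivalence closure of `SeqEquiv`, which is `SeqEquiv` itself
-- because hyperbolicity makes it transitive.
theorem boundaryPt_eq_iff {δ : ℝ} (hX : IsDeltaHyperbolic X δ) {w : X} {u v : BoundarySeq w} :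
    boundaryPt w u = boundaryPt w v ↔ SeqEquiv w u.1 v.1 := by
  refine ⟨fun h => ?_, fun h => Quot.sound h⟩
  have key : ∀ {u v : BoundarySeq w},
      Relation.EqvGen (fun u v : BoundarySeq w => SeqEquiv w u.1 v.1) u v → SeqEquiv w u.1 v.1 := by
    intro u v huv
    induction huv with
    | rel _ _ h => exact h
    | refl a => exact a.2
    | symm _ _ _ ih => exact ih.symm
    | trans _ _ _ _ _ ih₁ ih₂ => exact ih₁.trans hX ih₂
  exact key (Quot.eqvGen_exact h)

theorem SeqEquiv.convergesToInfinity_left {δ : ℝ} (hX : IsDeltaHyperbolic X δ) {w : X}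
    {u v : ℕ → X} (h : SeqEquiv w u v) : ConvergesToInfinity w u :=
  h.trans hX h.symm

theorem seqEquiv_of_forall_eventually {δ : ℝ} (hX : IsDeltaHyperbolic X δ) {w : X}
    {u v : ℕ → X} (hv : ConvergesToInfinity w v)
    (h : ∀ K : ℝ, ∀ᶠ i in atTop, ∀ᶠ j in atTop, K ≤ gromovProduct w (u i) (v j)) :
    SeqEquiv w u v := by
  rw [seqEquiv_iff]
  intro K
  obtain ⟨N, hN⟩ := tendsto_atTop_pair_iff.1 hv (K + δ)
  obtain ⟨I, hI⟩ := eventually_atTop.1 (h (K + δ))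
  refine ⟨max N I, fun i j hi hj => ?_⟩
  obtain ⟨k, hik, hk⟩ := ((hI i (le_of_max_le_right hi)).and (eventually_ge_atTop N)).exists
  exact hX.le_gromovProduct_of_le hik (hN k j hk (le_of_max_le_left hj))

theorem seqEquiv_of_dist_le {w : X} {u v : ℕ → X} (hv : ConvergesToInfinity w v) {D : ℝ}
    (h : ∀ n, dist (u n) (v n) ≤ D) : SeqEquiv w u v := by
  rw [seqEquiv_iff]
  intro K
  obtain ⟨N, hN⟩ := tendsto_atTop_pair_iff.1 hv (K + D)
  refine ⟨N, fun i j hi hj => ?_⟩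
  linarith [hN i j hi hj, gromovProduct_le_add_dist_left w (v i) (u i) (v j), h i,
    dist_comm (u i) (v i)]

theorem SeqEquiv.comp_strictMono {w : X} {u v : ℕ → X} (h : SeqEquiv w u v) {σ : ℕ → ℕ}
    (hσ : StrictMono σ) : SeqEquiv w (u ∘ σ) v := by
  have hmap : Tendsto (Prod.map σ id) (atTop : Filter (ℕ × ℕ)) atTop := by
    rw [← prod_atTop_atTop_eq]
    exact hσ.tendsto_atTop.prodMap tendsto_id
  exact h.comp hmap

theorem ConvergesToInfinity.tendsto_dist {w : X} {u : ℕ → X} (h : ConvergesToInfinity w u) :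
    Tendsto (fun n => dist (u n) w) atTop atTop := by
  simpa only [Function.comp_def, gromovProduct_self] using h.comp tendsto_atTop_diagonal

-- `liminf` of a sequence tending to `+∞` is the junk value `0` in `ℝ`, which is also `≥ 0`.
theorem liminf_nonneg_of_nonneg {u : ℕ → ℝ} (hu : ∀ n, 0 ≤ u n) : 0 ≤ liminf u atTop := by
  rw [liminf_eq]
  by_cases hbdd : BddAbove {a | ∀ᶠ n in atTop, a ≤ u n}
  · exact le_csSup hbdd (Eventually.of_forall hu)
  · rw [Real.sSup_of_not_bddAbove hbdd]

theorem boundaryGP_inr_le_liminf {w : X} {a b : GromovBoundary w} (u v : BoundarySeq w)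
    (hu : boundaryPt w u = a) (hv : boundaryPt w v = b) :
    boundaryGP w a (Sum.inr b) ≤ liminf (fun n => gromovProduct w (u.1 n) (v.1 n)) atTop := by
  refine csInf_le ⟨0, ?_⟩ ⟨u, v, hu, hv, rfl⟩
  rintro r ⟨u', v', -, -, rfl⟩
  exact liminf_nonneg_of_nonneg fun n => gromovProduct_nonneg w _ _

theorem exists_frequently_lt_of_boundaryGP_inl_lt {w : X} {a : GromovBoundary w} {z : X}
    {c : ℝ} (h : boundaryGP w a (Sum.inl z) < c) :
    ∃ u : BoundarySeq w, boundaryPt w u = a ∧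
      ∃ᶠ n in atTop, gromovProduct w (u.1 n) z < c := by
  obtain ⟨u, rfl⟩ := Quot.exists_rep a
  simp only [boundaryGP] at h
  obtain ⟨_, ⟨u', hu', rfl⟩, hlt⟩ := exists_lt_of_csInf_lt (by exact ⟨_, u, rfl, rfl⟩) h
  exact ⟨u', hu', frequently_lt_of_liminf_lt
    (isCoboundedUnder_ge_of_le atTop fun n => gromovProduct_le_dist_right w _ z) hlt⟩

theorem exists_seqEquiv_diagonal {δ : ℝ} (hX : IsDeltaHyperbolic X δ) {w : X} {v : ℕ → X}
    (hv : ConvergesToInfinity w v) {u : ℕ → ℕ → X} (hu : ∀ i, SeqEquiv w (u i) v)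
    {P : ℕ → ℕ → Prop} (hP : ∀ i, ∃ᶠ n in atTop, P i n) :
    ∃ n : ℕ → ℕ, (∀ i, P i (n i)) ∧ SeqEquiv w (fun i => u i (n i)) v := by
  have hsel : ∀ i : ℕ, ∃ n, P i n ∧ ∀ᶠ j in atTop, (i : ℝ) ≤ gromovProduct w (u i n) (v j) := by
    intro i
    obtain ⟨N, hN⟩ := seqEquiv_iff.1 (hu i) i
    obtain ⟨n, hn, hPn⟩ := frequently_atTop.1 (hP i) N
    exact ⟨n, hPn, eventually_atTop.2 ⟨N, fun j hj => hN n j hn hj⟩⟩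
  choose n hPn hn using hsel
  refine ⟨n, hPn, seqEquiv_of_forall_eventually hX hv fun K => ?_⟩
  filter_upwards [eventually_ge_atTop ⌈K⌉₊] with i hi
  exact (hn i).mono fun j hj => (Nat.le_ceil K).trans ((Nat.cast_le.2 hi).trans hj)

theorem boundaryGP_inr_le_of_seqEquiv {δ : ℝ} (hX : IsDeltaHyperbolic X δ) {w : X}
    {a A : GromovBoundary w} (v : BoundarySeq w) (hv : boundaryPt w v = A) {z : ℕ → X}
    (hz : SeqEquiv w z v.1) {t : ℝ} (ht : ∀ s, boundaryGP w a (Sum.inl (z s)) < t) :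
    boundaryGP w a (Sum.inr A) ≤ t := by
  -- Diagonalise representatives `u s` of `a` whose Gromov products with `z s` are frequently
  -- below `t`: the diagonal represents `a` and, paired with `z`, competes in the infimum on
  -- the left.
  obtain ⟨u₀, hu₀⟩ := Quot.exists_rep a
  choose u hua hu using fun s => exists_frequently_lt_of_boundaryGP_inl_lt (ht s)
  obtain ⟨n, hn, hU⟩ := exists_seqEquiv_diagonal hX u₀.2
    (fun s => (boundaryPt_eq_iff hX).1 ((hua s).trans hu₀.symm)) hu
  let U : BoundarySeq w := ⟨fun s => (u s).1 (n s), hU.convergesToInfinity_left hX⟩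
  let Z : BoundarySeq w := ⟨z, hz.convergesToInfinity_left hX⟩
  have hUa : boundaryPt w U = a := by
    rw [← hu₀]
    exact (boundaryPt_eq_iff hX).2 hU
  have hZA : boundaryPt w Z = A := by
    rw [← hv]
    exact (boundaryPt_eq_iff hX).2 hz
  refine (boundaryGP_inr_le_liminf U Z hUa hZA).trans ?_
  refine liminf_le_of_le (isBoundedUnder_of ⟨0, fun s => gromovProduct_nonneg w _ _⟩) ?_
  intro b hb
  obtain ⟨s, hs⟩ := hb.exists
  exact hs.trans (hn s).le

theorem eventually_lt_boundaryGP_of_seqEquiv {δ : ℝ} (hX : IsDeltaHyperbolic X δ) {w : X}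
    {a A : GromovBoundary w} (v : BoundarySeq w) (hv : boundaryPt w v = A) {z : ℕ → X}
    (hz : SeqEquiv w z v.1) {k : ℝ} (hk : k < boundaryGP w a (Sum.inr A)) :
    ∀ᶠ s in atTop, k < boundaryGP w a (Sum.inl (z s)) := by
  obtain ⟨t, hkt, ht⟩ := exists_between hk
  by_contra hcon
  obtain ⟨σ, hσ, hσk⟩ := extraction_of_frequently_atTop (not_eventually.1 hcon)
  have hle := boundaryGP_inr_le_of_seqEquiv hX v hv (hz.comp_strictMono hσ)
    fun s => (not_lt.1 (hσk s)).trans_lt hkt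
  exact hle.not_gt ht

theorem tendsto_nhds_of_seqEquiv {δ : ℝ} (hX : IsDeltaHyperbolic X δ) {w : X}
    {A : GromovBoundary w} (v : BoundarySeq w) (hv : boundaryPt w v = A) {z : ℕ → X}
    (hz : SeqEquiv w z v.1) :
    Tendsto (fun s => (Sum.inl (z s) : GromovClosure w)) atTop
      (@nhds _ (closureTop w) (Sum.inr A)) := by
  refine TopologicalSpace.tendsto_nhds_generateFrom_iff.2 fun S hS hAS => ?_
  rcases hS with ⟨x, r, -, rfl⟩ | ⟨a, k, -, rfl⟩
  · obtain ⟨_, -, h⟩ := hAS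
    exact absurd h Sum.inl_ne_inr
  · exact eventually_lt_boundaryGP_of_seqEquiv hX v hv hz hAS

theorem exists_gromovProduct_le_of_notMem {δ : ℝ} (hX : IsDeltaHyperbolic X δ) {w : X}
    {A : GromovBoundary w} {v : ℕ → X} (hv : ConvergesToInfinity w v)
    (hA : boundaryPt w ⟨v, hv⟩ = A) {U : Set (GromovClosure w)}
    (hU : IsNeighborhood w U (Sum.inr A)) :
    ∃ L : ℝ, 0 ≤ L ∧ ∃ M : ℕ, ∀ z : X, Sum.inl z ∉ U → ∀ n, M ≤ n →
      gromovProduct w z (v n) ≤ L := by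
  by_contra! h
  choose z hzU n hn hlt using fun s : ℕ => h s s.cast_nonneg s
  have hz : SeqEquiv w z v := by
    refine seqEquiv_of_forall_eventually hX hv fun K => ?_
    obtain ⟨N, hN⟩ := tendsto_atTop_pair_iff.1 hv (K + δ)
    filter_upwards [eventually_ge_atTop (max N ⌈K + δ⌉₊)] with s hs
    filter_upwards [eventually_ge_atTop N] with j hj
    refine hX.le_gromovProduct_of_le ?_ (hN (n s) j ((le_of_max_le_left hs).trans (hn s)) hj)
    exact ((Nat.le_ceil _).trans (Nat.cast_le.2 (le_of_max_le_right hs))).trans (hlt s).le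
  obtain ⟨s, hs⟩ := ((tendsto_nhds_of_seqEquiv hX ⟨v, hv⟩ hA hz).eventually_mem hU).exists
  exact hzU s hs

theorem apply_notMem_of_image_inter_eq_empty {w : X} {g : X ≃ᵢ X}
    {U V : Set (GromovClosure w)} (hg : closureMap w g '' U ∩ V = ∅) {a : X}
    (ha : Sum.inl a ∈ U) : Sum.inl (g a) ∉ V :=
  fun hV => (Set.eq_empty_iff_forall_notMem.1 hg) _ ⟨⟨_, ha, rfl⟩, hV⟩

theorem IsDeltaHyperbolic.gromovProduct_apply_lt {δ : ℝ} (hX : IsDeltaHyperbolic X δ)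
    (φ : X ≃ᵢ X) {w p y x₀ x₁ : X} {K L : ℝ} (hp : gromovProduct w p (φ x₀) ≤ K)
    (hy : gromovProduct w y (φ⁻¹ x₁) ≤ L)
    (hfar : 2 * (K + 1 + δ + L) + dist x₀ w + dist x₁ w ≤ dist (φ x₀) w) :
    gromovProduct w p (φ y) < K + 1 + δ := by
  have hq : K + 1 + δ ≤ gromovProduct w (φ y) (φ x₀) := by
    linarith [dist_sub_le_two_mul_gromovProduct_apply φ w y x₀ x₁]
  by_contra! hpq
  linarith [hX.le_gromovProduct_of_le hpq hq]

theorem square_dist_lower_bound_general (δ : ℝ) (hX : IsDeltaHyperbolic X δ) (w : X)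
    (f : X ≃ᵢ X)
    (Aplus Aminus : GromovBoundary w)
    (hAp : IsAttractingFixedPt w f Aplus) (hAm : IsRepellingFixedPt w f Aminus)
    (Uplus Uminus : Set (GromovClosure w))
    (hUp : IsNeighborhood w Uplus (Sum.inr Aplus))
    (hUm : IsNeighborhood w Uminus (Sum.inr Aminus))
    (x : X) (hx : Sum.inl x ∈ Uplus) :
    ∃ C : ℝ, 0 ≤ C ∧ ∃ M1 : ℕ, ∀ g : X ≃ᵢ X,
      (closureMap w g '' Uplus) ∩ Uminus = ∅ →
      ∀ m : ℕ, M1 ≤ m →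
        2 * dist x ((f ^ m * g) x) - 2 * C ≤ dist x (((f ^ m * g) ^ 2) x) := by
  obtain ⟨x₀, hα, rfl⟩ := hAp
  obtain ⟨x₁, hv, rfl⟩ := hAm
  have hpow (m : ℕ) (y : X) : (f ^ (m : ℤ)) y = (f ^ m) y := by rw [zpow_natCast]
  have hinv (m : ℕ) (y : X) : (f⁻¹ ^ (m : ℤ)) y = (f ^ m)⁻¹ y := by rw [zpow_natCast, inv_pow]
  obtain ⟨K, hK0, Mα, hK⟩ := exists_gromovProduct_le_of_notMem hX hα rfl hUp
  obtain ⟨L, -, Mv, hL⟩ := exists_gromovProduct_le_of_notMem hX hv rfl hUm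
  simp only [hpow, hinv] at hK hL
  have hxm : ∀ᶠ m : ℕ in atTop, Sum.inl ((f ^ m)⁻¹ x) ∈ Uminus := by
    have hseq : SeqEquiv w (fun m : ℕ => (f⁻¹ ^ (m : ℤ)) x) (fun m : ℕ => (f⁻¹ ^ (m : ℤ)) x₁) :=
      seqEquiv_of_dist_le hv fun m => (IsometryEquiv.dist_eq _ x x₁).le
    filter_upwards [(tendsto_nhds_of_seqEquiv hX ⟨_, hv⟩ rfl hseq).eventually_mem hUm] with m hm
    rwa [hinv] at hm
  obtain ⟨M, hM⟩ := eventually_atTop.1 <| ((eventually_ge_atTop (max Mα Mv)).and hxm).and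
    (hα.tendsto_dist.eventually_ge_atTop (2 * (K + 1 + δ + L) + dist x₀ w + dist x₁ w))
  refine ⟨K + 1 + δ + dist x w, by linarith [hX.delta_nonneg, dist_nonneg (x := x) (y := w)],
    M, fun g hg m hm => ?_⟩
  obtain ⟨⟨hmM, hxm⟩, hfar⟩ := hM m hm
  have hp : Sum.inl ((f ^ m * g)⁻¹ x) ∉ Uplus := fun hmem =>
    apply_notMem_of_image_inter_eq_empty hg hmem
      (by rwa [mul_inv_rev, IsometryEquiv.mul_apply, IsometryEquiv.apply_inv_self])
  have hy : Sum.inl (g x) ∉ Uminus := apply_notMem_of_image_inter_eq_empty hg hx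
  have hpq := hX.gromovProduct_apply_lt (f ^ m) (hK _ hp m (le_of_max_le_left hmM))
    (hL _ hy m (le_of_max_le_right hmM)) (by simpa only [hpow] using hfar)
  rw [dist_sq_apply, IsometryEquiv.mul_apply]
  linarith [gromovProduct_basepoint_ge x w ((f ^ m * g)⁻¹ x) ((f ^ m) (g x))]

/-- With `f`, `A₊`, `A₋`, `U₊`, `U₋` as before and `x ∈ X ∩ U₊`,
there are `C ≥ 0` and `M₁ ≥ 0` depending only on `δ`, `f`, `x`, `U₊`, `U₋` such
that for every isometry `g` with `g U₊ ∩ U₋ = ∅` and every `m ≥ M₁`,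
`d(x, (f^m g)² x) ≥ 2 d(x, f^m g x) − 2C`. -/
theorem square_dist_lower_bound (δ : ℝ) (hX : IsDeltaHyperbolic X δ) (w : X)
    (f : X ≃ᵢ X) (hf : IsHyperbolicIsometry f)
    (Aplus Aminus : GromovBoundary w)
    (hAp : IsAttractingFixedPt w f Aplus) (hAm : IsRepellingFixedPt w f Aminus)
    (Uplus Uminus : Set (GromovClosure w))
    (hUp : IsNeighborhood w Uplus (Sum.inr Aplus))
    (hUm : IsNeighborhood w Uminus (Sum.inr Aminus))
    (hdisj : Uplus ∩ Uminus = ∅)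
    (x : X) (hx : Sum.inl x ∈ Uplus) :
    ∃ C : ℝ, 0 ≤ C ∧ ∃ M1 : ℕ, ∀ g : X ≃ᵢ X,
      (closureMap w g '' Uplus) ∩ Uminus = ∅ →
      ∀ m : ℕ, M1 ≤ m →
        2 * dist x ((f ^ m * g) x) - 2 * C ≤ dist x (((f ^ m * g) ^ 2) x) :=
  square_dist_lower_bound_general δ hX w f Aplus Aminus hAp hAm Uplus Uminus hUp hUm x hx
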